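/- Key lemma for Theorem 1 (service reachability within two maximal travel times): Let x be a feasible state with Σ_{i,j} d(i,j) ≥ 1 and suppose V is nonempty. Then there exists a feasible trajectory of the undisturbed system from x over 2·tmax steps along which at least one waiting customer is picked up, i.e., v(τ)(k,i,j) = 1 for some step τ < 2·tmax, some vehicle k ∈ V, and some stations i, j ∈ N. -/

import Mathlib

/-! ## AMoD model (Zhang, Rossi, Pavone) -/

/-- A state of the AMoD system: waiting customers `d`, travel indicators `p`,
waiting-vehicle indicators `u`. -/
structure AMoDState (N V : Type) where
  d : N → N → ℤ
  p : V → N → ℕ → ℤ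
  u : V → N → ℤ

/-- A control of the AMoD system: customer-carrying trips `v`, rebalancing trips `w`. -/
structure AMoDControl (N V : Type) where
  v : V → N → N → ℤ
  w : V → N → N → ℤ

variable {N V : Type} [Fintype N] [DecidableEq N] [Fintype V]

/-- `Tmax i = (max_{j ≠ i} t j i) - 1`. -/
def Tmax (t : N → N → ℕ) (i : N) : ℕ :=
  ((Finset.univ : Finset N).erase i).sup (fun j => t j i) - 1

/-- `tmax = max_{i ≠ j} t i j`. -/
def tmax (t : N → N → ℕ) : ℕ :=
  ((Finset.univ : Finset N).offDiag).sup (fun p => t p.1 p.2)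

/-- `Σ_{i ∈ N} Σ_{T = 0}^{Tmax i} p k i T`. -/
def pSum (t : N → N → ℕ) (x : AMoDState N V) (k : V) : ℤ :=
  ∑ i : N, ∑ T ∈ Finset.range (Tmax t i + 1), x.p k i T

/-- Validity of a state: `d` nonnegative and zero on the diagonal,
`p` and `u` binary (and `p` vanishing out of range). -/
structure IsState (t : N → N → ℕ) (x : AMoDState N V) : Prop where
  d_nonneg : ∀ i j, 0 ≤ x.d i j
  d_diag : ∀ i, x.d i i = 0
  p_bin : ∀ k i T, T ≤ Tmax t i → x.p k i T = 0 ∨ x.p k i T = 1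
  p_oob : ∀ k i T, Tmax t i < T → x.p k i T = 0
  u_bin : ∀ k i, x.u k i = 0 ∨ x.u k i = 1

/-- Feasibility of a state: validity, constraint (P), and constraint (UP). -/
structure FeasState (t : N → N → ℕ) (x : AMoDState N V) : Prop where
  isState : IsState t x
  constrP : ∀ k, pSum t x k ≤ 1
  constrUP : ∀ k, (∑ i : N, x.u k i) + pSum t x k = 1

/-- Validity of a control: binary values, zero diagonal. -/
structure IsControl (uc : AMoDControl N V) : Prop where
  v_bin : ∀ k i j, uc.v k i j = 0 ∨ uc.v k i j = 1
  w_bin : ∀ k i j, uc.w k i j = 0 ∨ uc.w k i j = 1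
  v_diag : ∀ k i, uc.v k i i = 0
  w_diag : ∀ k i, uc.w k i i = 0

/-- Arrivals: nonnegative integers, zero on the diagonal. -/
def IsArrivals (c : N → N → ℤ) : Prop :=
  (∀ i j, 0 ≤ c i j) ∧ (∀ i, c i i = 0)

/-- Feasibility of a control at `(x, c)`: validity together with
constraints (A) and (B). -/
structure FeasControl (t : N → N → ℕ) (x : AMoDState N V) (c : N → N → ℤ)
    (uc : AMoDControl N V) : Prop where
  isControl : IsControl uc
  constrA : ∀ k i, (∑ j : N, (uc.v k i j + uc.w k i j)) ≤ x.u k i + x.p k i 0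
  constrB : ∀ i j, (∑ k : V, uc.v k i j) ≤ x.d i j + c i j

/-- The successor state `x⁺` of `x` under control `(v, w)` with arrivals `c`. -/
def succState (t : N → N → ℕ) (x : AMoDState N V) (c : N → N → ℤ)
    (uc : AMoDControl N V) : AMoDState N V where
  d := fun i j => x.d i j + c i j - ∑ k : V, uc.v k i j
  p := fun k i T =>
    if T < Tmax t i then
      x.p k i (T + 1) +
        ∑ j ∈ Finset.univ.filter (fun j => t j i = T + 1), (uc.v k j i + uc.w k j i)
    else if T = Tmax t i then
      ∑ j ∈ Finset.univ.filter (fun j => t j i = Tmax t i + 1), (uc.v k j i + uc.w k j i)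
    else 0
  u := fun k i => x.u k i + x.p k i 0 - ∑ j : N, (uc.v k i j + uc.w k i j)

/-- A feasible trajectory of the undisturbed system (`c ≡ 0`) from `x` over `n` steps. -/
def FeasTraj (t : N → N → ℕ) (x : AMoDState N V) (n : ℕ)
    (xs : ℕ → AMoDState N V) (cs : ℕ → AMoDControl N V) : Prop :=
  xs 0 = x ∧ ∀ τ < n, FeasControl t (xs τ) (fun _ _ => 0) (cs τ) ∧
    xs (τ + 1) = succState t (xs τ) (fun _ _ => 0) (cs τ)

/-- The primary cost: total number of waiting customers. -/
def Jx (x : AMoDState N V) : ℤ := ∑ i : N, ∑ j : N, x.d i j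

/-- The secondary cost: total rebalancing travel time. -/
def Ju (t : N → N → ℕ) (uc : AMoDControl N V) : ℤ :=
  ∑ k : V, ∑ i : N, ∑ j : N, (t i j : ℤ) * uc.w k i j

/-- The MPC cost of a plan over the horizon `thor`. -/
def planCost (t : N → N → ℕ) (ρ1 : ℝ) (thor : ℕ)
    (xs : ℕ → AMoDState N V) (cs : ℕ → AMoDControl N V) : ℝ :=
  ∑ τ ∈ Finset.range thor, ((Jx (xs (τ + 1)) : ℝ) + ρ1 * (Ju t (cs τ) : ℝ))

/-- An MPC-optimal plan at a feasible state `x`. -/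
def MPCOptimal (t : N → N → ℕ) (ρ1 : ℝ) (thor : ℕ) (x : AMoDState N V)
    (xs : ℕ → AMoDState N V) (cs : ℕ → AMoDControl N V) : Prop :=
  FeasTraj t x thor xs cs ∧
    ∀ ys ds, FeasTraj t x thor ys ds →
      planCost t ρ1 thor xs cs ≤ planCost t ρ1 thor ys ds

/-- An (infinite) MPC trajectory of the undisturbed system: a feasible trajectory in
which every applied control is the first control of some MPC-optimal plan. -/
def MPCTraj (t : N → N → ℕ) (ρ1 : ℝ) (thor : ℕ)
    (xs : ℕ → AMoDState N V) (cs : ℕ → AMoDControl N V) : Prop :=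
  (∀ τ, FeasControl t (xs τ) (fun _ _ => 0) (cs τ) ∧
      xs (τ + 1) = succState t (xs τ) (fun _ _ => 0) (cs τ)) ∧
  (∀ τ, ∃ ys ds, MPCOptimal t ρ1 thor (xs τ) ys ds ∧ ds 0 = cs τ)

/-!
Take a waiting customer at `i` bound for `j ≠ i` and any vehicle `k`. By (UP) the vehicle is either
waiting at some station `i₀` or reaches it within `Tmax i₀ ≤ tmax - 1` steps, so after idling that
long it is ready at `i₀`. If `i₀ = i` it picks the customer up at once; otherwise it drives empty to
`i`, is ready there `t i₀ i ≤ tmax` steps later and picks the customer up, all before step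
`2·tmax`. Feasibility of the remaining (idle) steps only needs the state to stay nonnegative, which
every feasible control preserves.
-/

namespace AMoDState

structure Nonneg (x : AMoDState N V) : Prop where
  d : ∀ i j, 0 ≤ x.d i j
  p : ∀ k i T, 0 ≤ x.p k i T
  u : ∀ k i, 0 ≤ x.u k i

def Ready (x : AMoDState N V) (k : V) (i : N) : Prop :=
  1 ≤ x.u k i + x.p k i 0

end AMoDState

open AMoDState

section Travel

variable (t : N → N → ℕ)

omit [DecidableEq N] in
theorem travel_le_tmax {i j : N} (hij : i ≠ j) : t i j ≤ tmax t :=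
  Finset.le_sup (f := fun q : N × N => t q.1 q.2) (b := (i, j))
    (Finset.mem_offDiag.2 ⟨Finset.mem_univ _, Finset.mem_univ _, hij⟩)

theorem travel_sub_one_le_Tmax {i j : N} (hij : i ≠ j) : t i j - 1 ≤ Tmax t j :=
  Nat.sub_le_sub_right (Finset.le_sup (f := fun i' => t i' j) (by simpa using hij)) 1

theorem Tmax_le_tmax_sub_one (i : N) : Tmax t i ≤ tmax t - 1 :=
  Nat.sub_le_sub_right (Finset.sup_le fun _ hj => travel_le_tmax t (Finset.ne_of_mem_erase hj)) 1

end Travel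

omit [Fintype V] in
theorem IsState.nonneg {t : N → N → ℕ} {x : AMoDState N V} (hx : IsState t x) : x.Nonneg where
  d := hx.d_nonneg
  p k i T := by
    rcases le_or_gt T (Tmax t i) with hT | hT
    · rcases hx.p_bin k i T hT with h | h <;> omega
    · exact (hx.p_oob k i T hT).ge
  u k i := by rcases hx.u_bin k i with h | h <;> omega

omit [Fintype V] in
theorem IsState.exists_waiting {t : N → N → ℕ} {x : AMoDState N V} (hx : IsState t x)
    (hd : 1 ≤ ∑ i : N, ∑ j : N, x.d i j) : ∃ i j, i ≠ j ∧ 1 ≤ x.d i j := by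
  by_contra! h
  have hle : ∀ i j, x.d i j ≤ 0 := fun i j => by
    rcases eq_or_ne i j with rfl | hij
    · exact (hx.d_diag i).le
    · linarith [h i j hij]
  have : ∑ i : N, ∑ j : N, x.d i j ≤ 0 :=
    Finset.sum_nonpos fun i _ => Finset.sum_nonpos fun j _ => hle i j
  omega

theorem AMoDState.Nonneg.succState {t : N → N → ℕ} {x : AMoDState N V} {uc : AMoDControl N V}
    (hx : x.Nonneg) (huc : FeasControl t x (fun _ _ => 0) uc) :
    (succState t x (fun _ _ => 0) uc).Nonneg := by
  have hvw : ∀ k i j, 0 ≤ uc.v k i j + uc.w k i j := fun k i j => by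
    rcases huc.isControl.v_bin k i j with h | h <;>
      rcases huc.isControl.w_bin k i j with h' | h' <;> omega
  refine ⟨fun i j => ?_, fun k i T => ?_, fun k i => ?_⟩
  · simpa [_root_.succState] using huc.constrB i j
  · simp only [_root_.succState]
    split_ifs
    · exact add_nonneg (hx.p k i _) (Finset.sum_nonneg fun j _ => hvw k j i)
    · exact Finset.sum_nonneg fun j _ => hvw k j i
    · rfl
  · simpa [_root_.succState] using huc.constrA k i

theorem FeasTraj.cons {t : N → N → ℕ} {x : AMoDState N V} {uc : AMoDControl N V} {n : ℕ}
    {xs : ℕ → AMoDState N V} {cs : ℕ → AMoDControl N V}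
    (huc : FeasControl t x (fun _ _ => 0) uc)
    (h : FeasTraj t (succState t x (fun _ _ => 0) uc) n xs cs) :
    FeasTraj t x (n + 1) (fun | 0 => x | τ + 1 => xs τ) (fun | 0 => uc | τ + 1 => cs τ) := by
  refine ⟨rfl, fun τ hτ => ?_⟩
  cases τ with
  | zero => exact ⟨huc, h.1⟩
  | succ τ => exact h.2 τ (by omega)

namespace AMoDControl

def idle : AMoDControl N V := ⟨fun _ _ _ => 0, fun _ _ _ => 0⟩

def trip [DecidableEq V] (k : V) (i j : N) : V → N → N → ℤ :=
  fun k' i' j' => if k' = k ∧ i' = i ∧ j' = j then 1 else 0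

def pickup [DecidableEq V] (k : V) (i j : N) : AMoDControl N V :=
  ⟨trip k i j, fun _ _ _ => 0⟩

def rebalance [DecidableEq V] (k : V) (i j : N) : AMoDControl N V :=
  ⟨fun _ _ _ => 0, trip k i j⟩

end AMoDControl

open AMoDControl

omit [DecidableEq N] in
theorem feasControl_idle {t : N → N → ℕ} {x : AMoDState N V} (hx : x.Nonneg) :
    FeasControl t x (fun _ _ => 0) idle where
  isControl := ⟨fun _ _ _ => .inl rfl, fun _ _ _ => .inl rfl, fun _ _ => rfl, fun _ _ => rfl⟩
  constrA k i := by simpa [idle] using add_nonneg (hx.u k i) (hx.p k i 0)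
  constrB i j := by simpa [idle] using hx.d i j

def idleStep (t : N → N → ℕ) (x : AMoDState N V) : AMoDState N V :=
  succState t x (fun _ _ => 0) idle

section IdleStep

variable {t : N → N → ℕ}

@[simp]
theorem idleStep_d (x : AMoDState N V) : (idleStep t x).d = x.d := by
  ext i j
  simp [idleStep, succState, idle]

theorem idleStep_p (x : AMoDState N V) (k : V) (i : N) (T : ℕ) :
    (idleStep t x).p k i T = if T < Tmax t i then x.p k i (T + 1) else 0 := by
  simp [idleStep, succState, idle]

theorem AMoDState.Nonneg.idleStep {x : AMoDState N V} (hx : x.Nonneg) : (idleStep t x).Nonneg :=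
  hx.succState (feasControl_idle hx)

theorem AMoDState.Nonneg.iterate_idleStep {x : AMoDState N V} (hx : x.Nonneg) (s : ℕ) :
    ((_root_.idleStep t)^[s] x).Nonneg := by
  induction s with
  | zero => exact hx
  | succ s ih => rw [Function.iterate_succ_apply']; exact ih.idleStep

@[simp]
theorem iterate_idleStep_d (x : AMoDState N V) (s : ℕ) : ((idleStep t)^[s] x).d = x.d := by
  induction s with
  | zero => rfl
  | succ s ih => rw [Function.iterate_succ_apply', idleStep_d, ih]

theorem iterate_idleStep_p (x : AMoDState N V) (k : V) (i : N) {T s : ℕ}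
    (hT : T + s ≤ Tmax t i) : ((idleStep t)^[s] x).p k i T = x.p k i (T + s) := by
  induction s generalizing x with
  | zero => rfl
  | succ s ih =>
    rw [Function.iterate_succ_apply, ih _ (by omega), idleStep_p, if_pos (by omega)]
    rfl

end IdleStep

theorem exists_feasTraj {t : N → N → ℕ} {x : AMoDState N V} (hx : x.Nonneg) (n : ℕ) :
    ∃ xs cs, FeasTraj t x n xs cs := by
  induction n generalizing x with
  | zero => exact ⟨fun _ => x, fun _ => idle, rfl, by simp⟩
  | succ n ih =>
    obtain ⟨xs, cs, h⟩ := ih hx.idleStep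
    exact ⟨_, _, h.cons (feasControl_idle hx)⟩

theorem FeasState.exists_ready {t : N → N → ℕ} {x : AMoDState N V} (hx : FeasState t x)
    (k : V) :
    ∃ i a, a ≤ Tmax t i ∧ ((idleStep t)^[a] x).Ready k i := by
  have hx₀ := hx.isState.nonneg
  by_cases hu : ∃ i, 1 ≤ x.u k i
  · obtain ⟨i, hi⟩ := hu
    exact ⟨i, 0, Nat.zero_le _, show 1 ≤ x.u k i + x.p k i 0 by linarith [hx₀.p k i 0]⟩
  obtain ⟨i, T, hT, hp⟩ : ∃ i T, T ≤ Tmax t i ∧ 1 ≤ x.p k i T := by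
    by_contra! hp
    push Not at hu
    have hu' : ∑ i, x.u k i ≤ 0 := Finset.sum_nonpos fun i _ => by linarith [hu i]
    have hp' : pSum t x k ≤ 0 := Finset.sum_nonpos fun i _ => Finset.sum_nonpos fun T hT => by
      linarith [hp i T (Nat.lt_succ_iff.1 (Finset.mem_range.1 hT))]
    linarith [hx.constrUP k]
  refine ⟨i, T, hT, ?_⟩
  unfold Ready
  rw [iterate_idleStep_p x k i (by omega : 0 + T ≤ Tmax t i), zero_add]
  linarith [(hx₀.iterate_idleStep (t := t) T).u k i]

def PickupReachable (t : N → N → ℕ) (x : AMoDState N V) (n : ℕ) : Prop :=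
  ∃ (xs : ℕ → AMoDState N V) (cs : ℕ → AMoDControl N V),
    FeasTraj t x n xs cs ∧ ∃ τ < n, ∃ (k : V) (i j : N), (cs τ).v k i j = 1

section PickupReachable

variable {t : N → N → ℕ} {x : AMoDState N V}

theorem PickupReachable.cons {uc : AMoDControl N V} {n : ℕ}
    (huc : FeasControl t x (fun _ _ => 0) uc)
    (h : PickupReachable t (succState t x (fun _ _ => 0) uc) n) : PickupReachable t x (n + 1) := by
  obtain ⟨xs, cs, hxs, τ, hτ, k, i, j, hv⟩ := h
  exact ⟨_, _, hxs.cons huc, τ + 1, by omega, k, i, j, hv⟩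

theorem pickupReachable_of_feasControl {uc : AMoDControl N V} {k : V} {i j : N} (hx : x.Nonneg)
    (huc : FeasControl t x (fun _ _ => 0) uc) (hv : uc.v k i j = 1) (n : ℕ) :
    PickupReachable t x (n + 1) := by
  obtain ⟨xs, cs, hxs⟩ := exists_feasTraj (hx.succState huc) n
  exact ⟨_, _, hxs.cons huc, 0, by omega, k, i, j, hv⟩

theorem PickupReachable.of_iterate_idleStep {a n : ℕ} (hx : x.Nonneg)
    (h : PickupReachable t ((idleStep t)^[a] x) n) : PickupReachable t x (a + n) := by
  induction a generalizing x with
  | zero => simpa using h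
  | succ a ih =>
    rw [Function.iterate_succ_apply] at h
    rw [show a + 1 + n = a + n + 1 by omega]
    exact (ih hx.idleStep h).cons (feasControl_idle hx)

end PickupReachable

section TripIndicator

variable {N V : Type} [DecidableEq N] [DecidableEq V] {k k' : V} {i j i' j' : N}

theorem trip_eq_zero_or_eq_one : trip k i j k' i' j' = 0 ∨ trip k i j k' i' j' = 1 := by
  unfold trip; split_ifs <;> simp

theorem trip_self (hij : i ≠ j) : trip k i j k' i' i' = 0 :=
  if_neg fun h : k' = k ∧ i' = i ∧ i' = j => hij (h.2.1 ▸ h.2.2)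

theorem sum_trip_dest [Fintype N] :
    ∑ j'' : N, trip k i j k' i' j'' = if k' = k ∧ i' = i then 1 else 0 := by
  simp [trip, ite_and]

theorem sum_trip_vehicle [Fintype V] :
    ∑ k'' : V, trip k i j k'' i' j' = if i' = i ∧ j' = j then 1 else 0 := by
  simp [trip, ite_and]

theorem sum_trip_origin {s : Finset N} (hi : i ∈ s) : ∑ i'' ∈ s, trip k i j k i'' j = 1 := by
  simp [trip, hi]

theorem AMoDState.Ready.sum_trip_le [Fintype N] {x : AMoDState N V} (hx : x.Nonneg)
    (hk : x.Ready k i) (k' : V) (i' : N) :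
    ∑ j'' : N, trip k i j k' i' j'' ≤ x.u k' i' + x.p k' i' 0 := by
  rw [sum_trip_dest]
  split_ifs with h
  · obtain ⟨rfl, rfl⟩ := h
    exact hk
  · exact add_nonneg (hx.u k' i') (hx.p k' i' 0)

end TripIndicator

section TripControls

variable [DecidableEq V] {t : N → N → ℕ} {x : AMoDState N V} {k : V} {i j : N}

theorem feasControl_pickup (hx : x.Nonneg) (hij : i ≠ j) (hk : x.Ready k i) (hd : 1 ≤ x.d i j) :
    FeasControl t x (fun _ _ => 0) (pickup k i j) where
  isControl :=
    ⟨fun _ _ _ => trip_eq_zero_or_eq_one, fun _ _ _ => .inl rfl, fun _ _ => trip_self hij,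
      fun _ _ => rfl⟩
  constrA k' i' := by simpa [pickup] using hk.sum_trip_le hx k' i'
  constrB i' j' := by
    simp only [pickup, sum_trip_vehicle, add_zero]
    split_ifs with h
    · obtain ⟨rfl, rfl⟩ := h
      exact hd
    · exact hx.d i' j'

theorem feasControl_rebalance (hx : x.Nonneg) (hij : i ≠ j) (hk : x.Ready k i) :
    FeasControl t x (fun _ _ => 0) (rebalance k i j) where
  isControl :=
    ⟨fun _ _ _ => .inl rfl, fun _ _ _ => trip_eq_zero_or_eq_one, fun _ _ => rfl,
      fun _ _ => trip_self hij⟩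
  constrA k' i' := by simpa [rebalance] using hk.sum_trip_le hx k' i'
  constrB i' j' := by simpa [rebalance] using hx.d i' j'

@[simp]
theorem succState_rebalance_d : (succState t x (fun _ _ => 0) (rebalance k i j)).d = x.d := by
  ext
  simp [succState, rebalance]

theorem ready_iterate_idleStep_succState_rebalance (hx : x.Nonneg) (hij : i ≠ j)
    (hk : x.Ready k i) (ht : 1 ≤ t i j) :
    ((idleStep t)^[t i j - 1] (succState t x (fun _ _ => 0) (rebalance k i j))).Ready k j := by
  have hT := travel_sub_one_le_Tmax t hij
  have harrive : 1 ≤ (succState t x (fun _ _ => 0) (rebalance k i j)).p k j (t i j - 1) := by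
    simp only [succState, rebalance, zero_add]
    split_ifs with hlt heq
    · rw [sum_trip_origin (by simp; omega)]
      linarith [hx.p k j (t i j - 1 + 1)]
    · rw [sum_trip_origin (by simp; omega)]
    · omega
  have hz := (hx.succState (feasControl_rebalance (t := t) hx hij hk)).iterate_idleStep
    (t := t) (t i j - 1)
  unfold Ready
  rw [iterate_idleStep_p _ _ _ (by omega : 0 + (t i j - 1) ≤ Tmax t j), zero_add]
  linarith [hz.u k j]

end TripControls

theorem pickupReachable_of_ready [DecidableEq V] {t : N → N → ℕ} {y : AMoDState N V}
    {k : V} {i₀ i j : N} {n : ℕ} (ht : ∀ i j : N, i ≠ j → 1 ≤ t i j) (hy : y.Nonneg)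
    (hij : i ≠ j) (hd : 1 ≤ y.d i j) (hk : y.Ready k i₀) (hn : tmax t < n) :
    PickupReachable t y n := by
  have hpickup : (pickup k i j : AMoDControl N V).v k i j = 1 := by simp [pickup, trip]
  by_cases h₀ : i₀ = i
  · subst h₀
    rw [show n = (n - 1) + 1 by omega]
    exact pickupReachable_of_feasControl hy (feasControl_pickup hy hij hk hd) hpickup _
  have hreb := feasControl_rebalance (t := t) (j := i) hy h₀ hk
  have htravel := travel_le_tmax t h₀
  have hpos := ht i₀ i h₀
  have hz := (hy.succState hreb).iterate_idleStep (t := t) (t i₀ i - 1)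
  have hready := ready_iterate_idleStep_succState_rebalance hy h₀ hk hpos
  rw [show n = ((t i₀ i - 1) + ((n - t i₀ i - 1) + 1)) + 1 by omega]
  refine .cons hreb (.of_iterate_idleStep (hy.succState hreb) ?_)
  exact pickupReachable_of_feasControl hz
    (feasControl_pickup hz hij hready (by simpa using hd)) hpickup _

theorem service_reachability_general {N V : Type} [Fintype N] [DecidableEq N] [Fintype V]
    [Nonempty V] (t : N → N → ℕ)
    (ht : ∀ i j : N, i ≠ j → 1 ≤ t i j)
    (x : AMoDState N V) (hx : FeasState t x)
    (hd : 1 ≤ ∑ i : N, ∑ j : N, x.d i j) :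
    ∃ (xs : ℕ → AMoDState N V) (cs : ℕ → AMoDControl N V),
      FeasTraj t x (2 * tmax t) xs cs ∧
        ∃ τ < 2 * tmax t, ∃ (k : V) (i j : N), (cs τ).v k i j = 1 := by
  classical
  obtain ⟨i, j, hij, hdij⟩ := hx.isState.exists_waiting hd
  obtain ⟨k⟩ := ‹Nonempty V›
  obtain ⟨i₀, a, ha, hk⟩ := hx.exists_ready k
  have hx₀ := hx.isState.nonneg
  have ha' : a ≤ tmax t - 1 := ha.trans (Tmax_le_tmax_sub_one t i₀)
  have htmax : 1 ≤ tmax t := (ht i j hij).trans (travel_le_tmax t hij)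
  rw [show 2 * tmax t = a + (2 * tmax t - a) by omega]
  exact PickupReachable.of_iterate_idleStep hx₀ <|
    pickupReachable_of_ready ht (hx₀.iterate_idleStep a) hij (by simpa using hdij) hk (by omega)

/-- **Key lemma for Theorem 1 (service reachability within two maximal travel times):**
from any feasible state with at least one waiting customer there is a feasible
trajectory of the undisturbed system over `2·tmax` steps along which at least one
waiting customer is picked up. -/
theorem service_reachability {N V : Type} [Fintype N] [DecidableEq N] [Fintype V]
    [Nonempty V] (t : N → N → ℕ) (hcard : 2 ≤ Fintype.card N)
    (ht : ∀ i j : N, i ≠ j → 1 ≤ t i j)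
    (x : AMoDState N V) (hx : FeasState t x)
    (hd : 1 ≤ ∑ i : N, ∑ j : N, x.d i j) :
    ∃ (xs : ℕ → AMoDState N V) (cs : ℕ → AMoDControl N V),
      FeasTraj t x (2 * tmax t) xs cs ∧
        ∃ τ < 2 * tmax t, ∃ (k : V) (i j : N), (cs τ).v k i j = 1 :=
  service_reachability_general t ht x hx hd
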